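/- arXiv:1304.7106 — 3 statements merged into one kernel-verified Lean document; each statement's English description precedes it below -/
import Mathlib

section
/- Let ℂⁿ be the conatural U_q(n_+)-module, on which e_k v_i = −q·δ_{k,i}·v_{i+1} in the standard basis v_1,…,v_n (with v_{n+1} = 0). For any left U_q(n_+)-module V, the evaluation map φ ↦ φ(v_1) is a linear bijection from the space of U_q(n_+)-module homomorphisms Hom_{U_q(n_+)}(ℂⁿ, V) onto the subspace {v ∈ V : e_1² v = 0 and e_i v = 0 for all 2 ≤ i ≤ n−1}. -/
noncomputable section

namespace QGL

/-! ### q-numbers.  Throughout, `q = exp ħ` and `q^z = exp (ħ z)` for `z : ℂ`. -/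

/-- `q = exp ħ`. -/
def qh (h : ℂ) : ℂ := Complex.exp h

/-- `q^z = exp (ħ z)` for a complex exponent `z`. -/
def qz (h z : ℂ) : ℂ := Complex.exp (h * z)

/-- the symmetric q-number `[z]_q = (q^z - q^{-z})/(q - q⁻¹)`. -/
def bq (h z : ℂ) : ℂ := (qz h z - qz h (-z)) / (qh h - (qh h)⁻¹)

/-- `q` is not a root of unity. -/
def NotRootOfUnity (q : ℂ) : Prop := ∀ m : ℕ, 0 < m → q ^ m ≠ 1

/-! ### The quantum nilpotent algebra `U_q(n₋)` (≅ `U_q(n₊)`), by generators and relations. -/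

/-- Generators `f_1, …, f_{n-1}` (0-based: `f_0, …, f_{n-2}`). -/
inductive NGen (n : ℕ) : Type
  | f : Fin (n-1) → NGen n

/-- The q-Serre relations of `U_q(n₋)`. -/
inductive NRel (n : ℕ) (q : ℂ) :
    FreeAlgebra ℂ (NGen n) → FreeAlgebra ℂ (NGen n) → Prop
  | serre (i j : Fin (n-1)) (h : (i:ℕ)+1 = j ∨ (j:ℕ)+1 = i) :
      NRel n q
        (FreeAlgebra.ι ℂ (NGen.f i) * FreeAlgebra.ι ℂ (NGen.f i) * FreeAlgebra.ι ℂ (NGen.f j)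
          + FreeAlgebra.ι ℂ (NGen.f j) * FreeAlgebra.ι ℂ (NGen.f i) * FreeAlgebra.ι ℂ (NGen.f i))
        ((q + q⁻¹) •
          (FreeAlgebra.ι ℂ (NGen.f i) * FreeAlgebra.ι ℂ (NGen.f j) * FreeAlgebra.ι ℂ (NGen.f i)))
  | comm (i j : Fin (n-1)) (h : (i:ℕ)+2 ≤ j ∨ (j:ℕ)+2 ≤ i) :
      NRel n q (FreeAlgebra.ι ℂ (NGen.f i) * FreeAlgebra.ι ℂ (NGen.f j))
        (FreeAlgebra.ι ℂ (NGen.f j) * FreeAlgebra.ι ℂ (NGen.f i))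

/-- `U_q(n₋)` (equally `U_q(n₊)`). -/
abbrev Un (n : ℕ) (q : ℂ) := RingQuot (NRel n q)

/-- The generator `f_i` (0-based) of `U_q(n₋)`. -/
def uf (n : ℕ) (q : ℂ) (i : Fin (n-1)) : Un n q :=
  RingQuot.mkAlgHom ℂ (NRel n q) (FreeAlgebra.ι ℂ (NGen.f i))

/-- `f_a` for a natural-number index (junk value `0` out of range). -/
def ufn (n : ℕ) (q : ℂ) (a : ℕ) : Un n q :=
  if h : a < n - 1 then uf n q ⟨a, h⟩ else 0

/-- The monomial `f_{a-1} ⋯ f_1 f_0` (`= 1` for `a = 0`). -/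
def mon (n : ℕ) (q : ℂ) : ℕ → Un n q
  | 0 => 1
  | a+1 => ufn n q a * mon n q a

/-- The left ideal of `U_q(n₋)` generated by `f_0 ^ 2` and the `f_i`, `i ≥ 1` (0-based). -/
def Jideal (n : ℕ) (q : ℂ) : Submodule (Un n q) (Un n q) :=
  Submodule.span (Un n q)
    ({ufn n q 0 * ufn n q 0} ∪ {x | ∃ i : Fin (n-1), 1 ≤ (i:ℕ) ∧ x = uf n q i})

/-- Inclusion `Fin (n-1) → Fin n`, `j ↦ j`. -/
def clo (n : ℕ) (j : Fin (n-1)) : Fin n := ⟨j, by have := j.isLt; omega⟩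

/-- Inclusion `Fin (n-1) → Fin n`, `j ↦ j+1`. -/
def chi (n : ℕ) (j : Fin (n-1)) : Fin n := ⟨(j:ℕ)+1, by have := j.isLt; omega⟩

/-- The natural action of the generator `f_i` on `ℂⁿ`:  `w_j ↦ δ_{ij} w_{j+1}` (0-based). -/
def natF (n : ℕ) (i : Fin (n-1)) : (Fin n → ℂ) →ₗ[ℂ] (Fin n → ℂ) :=
  (LinearMap.single ℂ (fun _ : Fin n => ℂ) (chi n i)).comp (LinearMap.proj (clo n i))

/-! ### The quantum group `U_q(gl_n)` by generators and relations. -/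

/-- Generators `K_i, K_i⁻¹` (`i : Fin n`) and `e_j, f_j` (`j : Fin (n-1)`), 0-based. -/
inductive Gen (n : ℕ) : Type
  | K : Fin n → Gen n
  | Kinv : Fin n → Gen n
  | E : Fin (n-1) → Gen n
  | F : Fin (n-1) → Gen n

/-- Kronecker delta with values in `ℤ`. -/
def dlt {n : ℕ} (i j : Fin n) : ℤ := if i = j then 1 else 0

open FreeAlgebra in
/-- The defining relations of `U_q(gl_n)`. -/
inductive GLRel (n : ℕ) (q : ℂ) :
    FreeAlgebra ℂ (Gen n) → FreeAlgebra ℂ (Gen n) → Prop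
  | KKinv (i : Fin n) : GLRel n q (ι ℂ (Gen.K i) * ι ℂ (Gen.Kinv i)) 1
  | KinvK (i : Fin n) : GLRel n q (ι ℂ (Gen.Kinv i) * ι ℂ (Gen.K i)) 1
  | KK (i j : Fin n) : GLRel n q (ι ℂ (Gen.K i) * ι ℂ (Gen.K j)) (ι ℂ (Gen.K j) * ι ℂ (Gen.K i))
  | KE (i : Fin n) (j : Fin (n-1)) :
      GLRel n q (ι ℂ (Gen.K i) * ι ℂ (Gen.E j))
        ((q ^ (dlt i (clo n j) - dlt i (chi n j))) • (ι ℂ (Gen.E j) * ι ℂ (Gen.K i)))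
  | KF (i : Fin n) (j : Fin (n-1)) :
      GLRel n q (ι ℂ (Gen.K i) * ι ℂ (Gen.F j))
        ((q ^ (dlt i (chi n j) - dlt i (clo n j))) • (ι ℂ (Gen.F j) * ι ℂ (Gen.K i)))
  | EF (i j : Fin (n-1)) :
      GLRel n q (ι ℂ (Gen.E i) * ι ℂ (Gen.F j) - ι ℂ (Gen.F j) * ι ℂ (Gen.E i))
        (if i = j then
          ((q - q⁻¹)⁻¹) •
            (ι ℂ (Gen.K (clo n i)) * ι ℂ (Gen.Kinv (chi n i))
              - ι ℂ (Gen.Kinv (clo n i)) * ι ℂ (Gen.K (chi n i)))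
         else 0)
  | serreE (i j : Fin (n-1)) (h : (i:ℕ)+1 = j ∨ (j:ℕ)+1 = i) :
      GLRel n q
        (ι ℂ (Gen.E i) * ι ℂ (Gen.E i) * ι ℂ (Gen.E j)
          + ι ℂ (Gen.E j) * ι ℂ (Gen.E i) * ι ℂ (Gen.E i))
        ((q + q⁻¹) • (ι ℂ (Gen.E i) * ι ℂ (Gen.E j) * ι ℂ (Gen.E i)))
  | serreF (i j : Fin (n-1)) (h : (i:ℕ)+1 = j ∨ (j:ℕ)+1 = i) :
      GLRel n q
        (ι ℂ (Gen.F i) * ι ℂ (Gen.F i) * ι ℂ (Gen.F j)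
          + ι ℂ (Gen.F j) * ι ℂ (Gen.F i) * ι ℂ (Gen.F i))
        ((q + q⁻¹) • (ι ℂ (Gen.F i) * ι ℂ (Gen.F j) * ι ℂ (Gen.F i)))
  | commE (i j : Fin (n-1)) (h : (i:ℕ)+2 ≤ j ∨ (j:ℕ)+2 ≤ i) :
      GLRel n q (ι ℂ (Gen.E i) * ι ℂ (Gen.E j)) (ι ℂ (Gen.E j) * ι ℂ (Gen.E i))
  | commF (i j : Fin (n-1)) (h : (i:ℕ)+2 ≤ j ∨ (j:ℕ)+2 ≤ i) :
      GLRel n q (ι ℂ (Gen.F i) * ι ℂ (Gen.F j)) (ι ℂ (Gen.F j) * ι ℂ (Gen.F i))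

/-- The quantum group `U_q(gl_n)`. -/
abbrev Uq (n : ℕ) (q : ℂ) := RingQuot (GLRel n q)

def uK (n : ℕ) (q : ℂ) (i : Fin n) : Uq n q :=
  RingQuot.mkAlgHom ℂ (GLRel n q) (FreeAlgebra.ι ℂ (Gen.K i))

def uKinv (n : ℕ) (q : ℂ) (i : Fin n) : Uq n q :=
  RingQuot.mkAlgHom ℂ (GLRel n q) (FreeAlgebra.ι ℂ (Gen.Kinv i))

def uE (n : ℕ) (q : ℂ) (j : Fin (n-1)) : Uq n q :=
  RingQuot.mkAlgHom ℂ (GLRel n q) (FreeAlgebra.ι ℂ (Gen.E j))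

def uF (n : ℕ) (q : ℂ) (j : Fin (n-1)) : Uq n q :=
  RingQuot.mkAlgHom ℂ (GLRel n q) (FreeAlgebra.ι ℂ (Gen.F j))

/-- `U_q(gl_n)` with `q = exp ħ`. -/
abbrev UQ (n : ℕ) (h : ℂ) := Uq n (qh h)

/-- `K_a` for a natural-number index (junk value `1` out of range). -/
def uKn (n : ℕ) (h : ℂ) (a : ℕ) : UQ n h := if ha : a < n then uK n (qh h) ⟨a, ha⟩ else 1

/-- `K_a⁻¹` for a natural-number index (junk value `1` out of range). -/
def uKinvn (n : ℕ) (h : ℂ) (a : ℕ) : UQ n h := if ha : a < n then uKinv n (qh h) ⟨a, ha⟩ else 1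

/-- `e_a` for a natural-number index (junk value `0` out of range). -/
def uEn (n : ℕ) (h : ℂ) (a : ℕ) : UQ n h := if ha : a < n - 1 then uE n (qh h) ⟨a, ha⟩ else 0

/-- `f_a` for a natural-number index (junk value `0` out of range). -/
def uFn (n : ℕ) (h : ℂ) (a : ℕ) : UQ n h := if ha : a < n - 1 then uF n (qh h) ⟨a, ha⟩ else 0

/-! ### Verma modules. -/

/-- The left ideal generated by the `e_j` and the `K_i - q^{λ_i}`. -/
def VermaIdeal (n : ℕ) (h : ℂ) (lam : Fin n → ℂ) : Submodule (UQ n h) (UQ n h) :=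
  Submodule.span (UQ n h)
    ({x | ∃ j : Fin (n-1), x = uE n (qh h) j} ∪
     {x | ∃ i : Fin n, x = uK n (qh h) i - algebraMap ℂ (UQ n h) (qz h (lam i))})

/-- The Verma module `M̂_λ`. -/
abbrev Verma (n : ℕ) (h : ℂ) (lam : Fin n → ℂ) := UQ n h ⧸ VermaIdeal n h lam

/-- The highest-weight generator `v_λ` of `M̂_λ`. -/
def vv (n : ℕ) (h : ℂ) (lam : Fin n → ℂ) : Verma n h lam := Submodule.Quotient.mk 1

/-! ### Dynamical root vectors. -/

/-- The Cartan coefficient `C(c) = (q^c K_{a+1} K_b⁻¹ - q^{-c} K_{a+1}⁻¹ K_b)/(q - q⁻¹)`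
(0-based indices). -/
def Cc (n : ℕ) (h : ℂ) (a b c : ℕ) : UQ n h :=
  ((qh h - (qh h)⁻¹)⁻¹) •
    ((qh h ^ c) • (uKn n h (a+1) * uKinvn n h b)
      - ((qh h)⁻¹ ^ c) • (uKinvn n h (a+1) * uKn n h b))

/-- The dynamical root vector `f̌_{ε_a - ε_b}` (0-based indices `a < b < n`). -/
def fcheck (n : ℕ) (h : ℂ) (a b : ℕ) : UQ n h :=
  if hb : b ≤ a + 1 then uFn n h a
  else uFn n h a * fcheck n h (a+1) b * Cc n h a b (b-a-1)
    - fcheck n h (a+1) b * uFn n h a * Cc n h a b (b-a-2)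
termination_by b - a
decreasing_by all_goals omega

/-- `f̌_{ε_a - ε_b}` extended by the convention `f̌_0 = 1`. -/
def fcheckE (n : ℕ) (h : ℂ) (a b : ℕ) : UQ n h := if a = b then 1 else fcheck n h a b

/-- `λ_a` for a natural-number index (junk value `0` out of range). -/
def lamn (n : ℕ) (lam : Fin n → ℂ) (a : ℕ) : ℂ := if ha : a < n then lam ⟨a, ha⟩ else 0

/-! ### The module `ℂⁿ ⊗ Y`, realized on `Fin n → Y` via `Σ_i w_i ⊗ y_i ↔ (y_i)_i`. -/

section Tensor

variable (n : ℕ) (h : ℂ) {Y : Type*} [AddCommGroup Y] [Module ℂ Y] [Module (UQ n h) Y]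

/-- The action of `e_k` on `ℂⁿ ⊗ Y`:  `e_k(w ⊗ y) = e_k w ⊗ y + K_k K_{k+1}⁻¹ w ⊗ e_k y`. -/
def Etens (k : Fin (n-1)) (u : Fin n → Y) : Fin n → Y := fun j =>
  (if j = clo n k then u (chi n k) else 0)
    + (qh h ^ (dlt (clo n k) j - dlt (chi n k) j)) • (uE n (qh h) k • u j)

/-- The action of `f_k` on `ℂⁿ ⊗ Y`:  `f_k(w ⊗ y) = w ⊗ f_k y + f_k w ⊗ K_k⁻¹ K_{k+1} y`. -/
def Ftens (k : Fin (n-1)) (u : Fin n → Y) : Fin n → Y := fun j =>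
  (uF n (qh h) k • u j)
    + (if j = chi n k then (uKinv n (qh h) (clo n k) * uK n (qh h) (chi n k)) • u (clo n k) else 0)

/-- The action of `K_i` on `ℂⁿ ⊗ Y`:  `K_i(w ⊗ y) = K_i w ⊗ K_i y`. -/
def Ktens (i : Fin n) (u : Fin n → Y) : Fin n → Y := fun j =>
  (if i = j then qh h else 1) • (uK n (qh h) i • u j)

/-- The action of `K_i⁻¹` on `ℂⁿ ⊗ Y`:  `K_i⁻¹(w ⊗ y) = K_i⁻¹ w ⊗ K_i⁻¹ y`. -/
def Kinvtens (i : Fin n) (u : Fin n → Y) : Fin n → Y := fun j =>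
  (if i = j then (qh h)⁻¹ else 1) • (uKinv n (qh h) i • u j)

end Tensor

/-- `V̂^λ_c`: the smallest subspace of `ℂⁿ ⊗ M̂_λ` containing `w_p ⊗ v_λ` for `p < c`
(0-based) and stable under all `f_k`. -/
def Vhat (n : ℕ) (h : ℂ) (lam : Fin n → ℂ) (c : ℕ) : Submodule ℂ (Fin n → Verma n h lam) :=
  sInf {W | (∀ p : Fin n, (p:ℕ) < c → Pi.single p (vv n h lam) ∈ W) ∧
            ∀ (k : Fin (n-1)) x, x ∈ W → Ftens n h k x ∈ W}

/-- The coefficient `(-q)^a ∏_{j<a} [λ_j - λ_l + l - j - 1]_q` of `û_l` (0-based). -/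
def coefu (n : ℕ) (h : ℂ) (lam : Fin n → ℂ) (l a : ℕ) : ℂ :=
  (-(qh h))^a * ∏ j ∈ Finset.range a, bq h (lamn n lam j - lamn n lam l + (l:ℂ) - (j:ℂ) - 1)

/-- The vector `û_l = Σ_{a ≤ l} (-q)^a (∏_{j<a} [λ_j-λ_l+l-j-1]_q) · w_a ⊗ f̌_{ε_a-ε_l} v_λ`
(0-based `l`). -/
def uhat (n : ℕ) (h : ℂ) (lam : Fin n → ℂ) (l : ℕ) : Fin n → Verma n h lam := fun a =>
  if (a:ℕ) ≤ l then coefu n h lam l a • (fcheckE n h a l • vv n h lam) else 0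

/-- `M̂^λ_l`: the `U_q(gl_n)`-submodule of `ℂⁿ ⊗ M̂_λ` generated by `û_l` (0-based `l`). -/
def Mhat (n : ℕ) (h : ℂ) (lam : Fin n → ℂ) (l : ℕ) : Submodule ℂ (Fin n → Verma n h lam) :=
  sInf {W | uhat n h lam l ∈ W ∧
            (∀ (k : Fin (n-1)) x, x ∈ W → Etens n h k x ∈ W) ∧
            (∀ (k : Fin (n-1)) x, x ∈ W → Ftens n h k x ∈ W) ∧
            (∀ (i : Fin n) x, x ∈ W → Ktens n h i x ∈ W) ∧
            (∀ (i : Fin n) x, x ∈ W → Kinvtens n h i x ∈ W)}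

/-- The principal monomial `ψ_{ab} = f_a f_{a+1} ⋯ f_{b-1}` (0-based). -/
def psi (n : ℕ) (h : ℂ) (a b : ℕ) : UQ n h :=
  ((List.range (b - a)).map (fun t => uFn n h (a + t))).prod

/-! ### Blocks, admissible permutations, the shifted Weyl action. -/

/-- The 0-based starting position `o_i = n_1 + ⋯ + n_{i-1}` of the `i`-th block. -/
def ost (k : ℕ) (nn : Fin k → ℕ) (i : Fin k) : ℕ := ∑ j ∈ Finset.Iio i, nn j

/-- `a` and `b` lie in the same block. -/
def sameBlock (n k : ℕ) (nn : Fin k → ℕ) (a b : Fin n) : Prop :=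
  ∃ i : Fin k, ost k nn i ≤ (a:ℕ) ∧ (a:ℕ) < ost k nn i + nn i ∧
    ost k nn i ≤ (b:ℕ) ∧ (b:ℕ) < ost k nn i + nn i

/-- A permutation is admissible if it is increasing on each block. -/
def Admissible (n k : ℕ) (nn : Fin k → ℕ) (σ : Equiv.Perm (Fin n)) : Prop :=
  ∀ a b : Fin n, a < b → sameBlock n k nn a b → σ a < σ b

/-- The shifted action `σ·λ = σ(λ+ρ) - ρ`, with `ρ = (n-1, n-2, …, 0)`. -/
def sdot (n : ℕ) (σ : Equiv.Perm (Fin n)) (lam : Fin n → ℂ) : Fin n → ℂ := fun a =>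
  (lam (σ⁻¹ a) + ((n:ℂ) - 1 - (((σ⁻¹ a : Fin n) : ℕ) : ℂ))) - ((n:ℂ) - 1 - ((a:ℕ) : ℂ))

/-- The submodule of `M̂_{σ·λ}` generated by the singular vectors
`f̌_{ε_{σ(i)} - ε_{σ(i+1)}} v_{σ·λ}`, over all `i` with `i, i+1` in the same block. -/
def NSub (n : ℕ) (h : ℂ) (k : ℕ) (nn : Fin k → ℕ) (σ : Equiv.Perm (Fin n))
    (lam : Fin n → ℂ) : Submodule (UQ n h) (Verma n h (sdot n σ lam)) :=
  Submodule.span (UQ n h)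
    {x | ∃ (i : Fin n) (hi : (i:ℕ)+1 < n), sameBlock n k nn i ⟨(i:ℕ)+1, hi⟩ ∧
      x = fcheck n h ((σ i : Fin n) : ℕ) ((σ ⟨(i:ℕ)+1, hi⟩ : Fin n) : ℕ) • vv n h (sdot n σ lam)}

section Projection

variable (n : ℕ) (h : ℂ) {W : Type*} [AddCommGroup W] [Module ℂ W] [Module (UQ n h) W]
  [IsScalarTower ℂ (UQ n h) W] (N : Submodule (UQ n h) W)

/-- The map `id ⊗ ϖ : ℂⁿ ⊗ W → ℂⁿ ⊗ (W/N)` in the realization on `n`-tuples. -/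
def piMkQ : (Fin n → W) →ₗ[ℂ] (Fin n → W ⧸ N) where
  toFun u := fun j => Submodule.Quotient.mk (u j)
  map_add' u v := by funext j; simp
  map_smul' c u := by funext j; simp [← Submodule.Quotient.mk_smul]

end Projection


/-! ### Auxiliary lemmas for Statement 2. -/

section Stmt2Aux

variable {n : ℕ} {q : ℂ}

lemma uf_comm (i j : Fin (n-1)) (h : (i:ℕ)+2 ≤ j ∨ (j:ℕ)+2 ≤ i) :
    uf n q i * uf n q j = uf n q j * uf n q i := by
  have := RingQuot.mkAlgHom_rel ℂ (NRel.comm (n := n) (q := q) i j h)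
  simpa [uf, map_mul] using this

lemma uf_serre (i j : Fin (n-1)) (h : (i:ℕ)+1 = j ∨ (j:ℕ)+1 = i) :
    uf n q i * uf n q i * uf n q j + uf n q j * uf n q i * uf n q i
      = (q + q⁻¹) • (uf n q i * uf n q j * uf n q i) := by
  have := RingQuot.mkAlgHom_rel ℂ (NRel.serre (n := n) (q := q) i j h)
  simpa [uf, map_mul, map_add, map_smul] using this

lemma ufn_comm (a b : ℕ) (h : a + 2 ≤ b) :
    ufn n q a * ufn n q b = ufn n q b * ufn n q a := by
  by_cases ha : a < n - 1
  · by_cases hb : b < n - 1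
    · simp only [ufn, dif_pos ha, dif_pos hb]
      exact uf_comm ⟨a, ha⟩ ⟨b, hb⟩ (Or.inl h)
    · simp [ufn, dif_neg hb]
  · simp [ufn, dif_neg ha]

lemma ufn_serre (a b : ℕ) (hab : a+1 = b ∨ b+1 = a) :
    ufn n q a * ufn n q a * ufn n q b + ufn n q b * ufn n q a * ufn n q a
      = (q + q⁻¹) • (ufn n q a * ufn n q b * ufn n q a) := by
  by_cases ha : a < n - 1
  · by_cases hb : b < n - 1
    · simp only [ufn, dif_pos ha, dif_pos hb]
      exact uf_serre ⟨a, ha⟩ ⟨b, hb⟩ hab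
    · simp [ufn, dif_neg hb]
  · simp [ufn, dif_neg ha]

lemma mon_zero : mon n q 0 = 1 := rfl

lemma mon_succ (a : ℕ) : mon n q (a+1) = ufn n q a * mon n q a := rfl

lemma mon_comm (a k : ℕ) (h : a + 1 ≤ k) :
    ufn n q k * mon n q a = mon n q a * ufn n q k := by
  induction a with
  | zero => simp [mon_zero]
  | succ c ih =>
    rw [mon_succ, ← mul_assoc, ← ufn_comm c k (by omega), mul_assoc, ih (by omega),
      ← mul_assoc]

variable {V : Type*} [AddCommGroup V] [Module ℂ V] [Module (Un n q) V]
  [IsScalarTower ℂ (Un n q) V]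

lemma sc (c : ℂ) (x : Un n q) (m : V) : x • (c • m) = c • (x • m) := by
  rw [← algebraMap_smul (Un n q) c m, ← mul_smul, ← Algebra.commutes, mul_smul,
    algebraMap_smul]

variable (v₀ : V)

lemma kill_high (h1 : ∀ k : ℕ, 1 ≤ k → ufn n q k • v₀ = 0) (a k : ℕ) (h : a + 1 ≤ k) :
    ufn n q k • (mon n q a • v₀) = 0 := by
  rw [← mul_smul, mon_comm a k h, mul_smul, h1 k (by omega), smul_zero]

lemma kill_sq (h0 : (ufn n q 0 * ufn n q 0) • v₀ = 0)
    (h1 : ∀ k : ℕ, 1 ≤ k → ufn n q k • v₀ = 0) (k : ℕ) :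
    (ufn n q k * ufn n q k) • (mon n q k • v₀) = 0 := by
  cases k with
  | zero => simpa [mon_zero] using h0
  | succ c =>
    have hs := ufn_serre (n := n) (q := q) (c+1) c (Or.inr rfl)
    have e1 : ufn n q (c+1) • (mon n q c • v₀) = 0 := kill_high v₀ h1 c (c+1) le_rfl
    have happ := congrArg (fun x : Un n q => x • (mon n q c • v₀)) hs
    simp only [add_smul, mul_smul, smul_assoc, e1, smul_zero, add_zero, zero_add] at happ
    simpa [mon_succ, mul_smul] using happ

lemma kill_low (hq2 : q + q⁻¹ ≠ 0) (h0 : (ufn n q 0 * ufn n q 0) • v₀ = 0)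
    (h1 : ∀ k : ℕ, 1 ≤ k → ufn n q k • v₀ = 0) :
    ∀ j k : ℕ, k < j → ufn n q k • (mon n q j • v₀) = 0 := by
  intro j
  induction j with
  | zero => intro k hk; omega
  | succ c ih =>
    intro k hk
    rcases (by omega : k = c ∨ k + 1 = c ∨ k + 2 ≤ c) with h | h | h
    · subst h
      have := kill_sq v₀ h0 h1 k
      simpa [mon_succ, mul_smul] using this
    · subst h
      -- goal: ufn k • (mon (k+2) • v₀) = 0
      have hs := ufn_serre (n := n) (q := q) k (k+1) (Or.inl rfl)
      have e1 : ufn n q (k+1) • (mon n q k • v₀) = 0 := kill_high v₀ h1 k (k+1) le_rfl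
      have e2 : ufn n q k • (ufn n q k • (mon n q k • v₀)) = 0 := by
        have := kill_sq v₀ h0 h1 k
        simpa [mul_smul] using this
      have happ := congrArg (fun x : Un n q => x • (mon n q k • v₀)) hs
      simp only [add_smul, mul_smul, smul_assoc, e1, e2, smul_zero, add_zero,
        zero_add] at happ
      -- happ : 0 = (q+q⁻¹) • (f_k • (f_{k+1} • (f_k • w)))
      have hz : ufn n q k • (ufn n q (k+1) • (ufn n q k • (mon n q k • v₀))) = 0 := by
        calc ufn n q k • (ufn n q (k+1) • (ufn n q k • (mon n q k • v₀)))
            = (q + q⁻¹)⁻¹ • ((q + q⁻¹) •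
                (ufn n q k • (ufn n q (k+1) • (ufn n q k • (mon n q k • v₀))))) :=
              (inv_smul_smul₀ hq2 _).symm
          _ = (q + q⁻¹)⁻¹ • (0 : V) := by rw [add_smul, ← happ]
          _ = 0 := smul_zero _
      simpa [mon_succ, mul_smul] using hz
    · rw [mon_succ, mul_smul, ← mul_smul (ufn n q k), ufn_comm k c h, mul_smul,
        ih k (by omega), smul_zero]

lemma kill_ne (hq2 : q + q⁻¹ ≠ 0) (h0 : (ufn n q 0 * ufn n q 0) • v₀ = 0)
    (h1 : ∀ k : ℕ, 1 ≤ k → ufn n q k • v₀ = 0) (j k : ℕ) (h : k ≠ j) :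
    ufn n q k • (mon n q j • v₀) = 0 := by
  rcases Nat.lt_or_ge j k with hlt | hge
  · exact kill_high v₀ h1 j k (by omega)
  · exact kill_low v₀ hq2 h0 h1 j k (by omega)

end Stmt2Aux

lemma natF_apply (n : ℕ) (k : Fin (n-1)) (u : Fin n → ℂ) :
    natF n k u = Pi.single (chi n k) (u (clo n k)) := rfl

section Stmt2Main

variable {n : ℕ} {q : ℂ} {V : Type*} [AddCommGroup V] [Module ℂ V] [Module (Un n q) V]
  [IsScalarTower ℂ (Un n q) V]

lemma memA_single (φ : (Fin n → ℂ) →ₗ[ℂ] V)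
    (hφ : ∀ (k : Fin (n-1)) (v : Fin n → ℂ), φ ((-q) • natF n k v) = uf n q k • φ v)
    (k : Fin (n-1)) (p : Fin n) :
    uf n q k • φ (Pi.single p 1) =
      if p = clo n k then (-q) • φ (Pi.single (chi n k) 1) else 0 := by
  rw [← hφ k (Pi.single p 1), natF_apply]
  rcases eq_or_ne p (clo n k) with hp | hp
  · rw [if_pos hp, hp, Pi.single_eq_same, map_smul]
  · rw [if_neg hp, Pi.single_eq_of_ne (Ne.symm hp), Pi.single_zero, smul_zero, map_zero]

lemma apply_eq_sum (φ : (Fin n → ℂ) →ₗ[ℂ] V) (w : Fin n → ℂ) :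
    φ w = ∑ a, w a • φ (Pi.single a 1) := by
  conv_lhs => rw [← Finset.univ_sum_single w]
  rw [map_sum]
  refine Finset.sum_congr rfl fun a _ => ?_
  rw [← map_smul]
  congr 1
  ext j
  rcases eq_or_ne j a with hj | hj
  · subst hj; simp
  · simp [Pi.single_eq_of_ne hj]

/-- The linear map `w ↦ ∑ a, w a • u a`. -/
def mkPhi {V : Type*} [AddCommGroup V] [Module ℂ V] (n : ℕ) (u : Fin n → V) :
    (Fin n → ℂ) →ₗ[ℂ] V where
  toFun w := ∑ a, w a • u a
  map_add' w₁ w₂ := by simp [add_smul, Finset.sum_add_distrib]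
  map_smul' c w := by simp [smul_smul, Finset.smul_sum]

lemma mkPhi_apply {V : Type*} [AddCommGroup V] [Module ℂ V] (n : ℕ) (u : Fin n → V)
    (w : Fin n → ℂ) : mkPhi n u w = ∑ a, w a • u a := rfl

lemma mkPhi_single {V : Type*} [AddCommGroup V] [Module ℂ V] (n : ℕ) (u : Fin n → V)
    (p : Fin n) (c : ℂ) : mkPhi n u (Pi.single p c) = c • u p := by
  rw [mkPhi_apply,
    Finset.sum_eq_single p (fun b _ hb => by rw [Pi.single_eq_of_ne hb, zero_smul])
      (fun h => absurd (Finset.mem_univ _) h),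
    Pi.single_eq_same]

/-- The vectors `u_a = (-q)^{-a} f_{a-1} ⋯ f_0 v`. -/
def uvec (n : ℕ) (q : ℂ) {V : Type*} [AddCommGroup V] [Module ℂ V] [Module (Un n q) V]
    (v : V) : Fin n → V := fun a => ((-q)⁻¹) ^ (a : ℕ) • (mon n q (a : ℕ) • v)

lemma uf_smul_uvec (hq0 : q ≠ 0) (hq2 : q + q⁻¹ ≠ 0) (v : V)
    (h0' : (ufn n q 0 * ufn n q 0) • v = 0) (h1' : ∀ k : ℕ, 1 ≤ k → ufn n q k • v = 0)
    (k : Fin (n-1)) (a : Fin n) :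
    uf n q k • uvec n q v a = if a = clo n k then (-q) • uvec n q v (chi n k) else 0 := by
  have hufn : ufn n q (k : ℕ) = uf n q k := by
    simp [ufn, k.isLt]
  have hneg : (-q) ≠ 0 := neg_ne_zero.mpr hq0
  rcases eq_or_ne a (clo n k) with hac | hac
  · rw [if_pos hac, hac]
    show uf n q k • ((-q)⁻¹ ^ ((clo n k : Fin n) : ℕ) • (mon n q ((clo n k : Fin n) : ℕ) • v))
      = (-q) • ((-q)⁻¹ ^ ((chi n k : Fin n) : ℕ) • (mon n q ((chi n k : Fin n) : ℕ) • v))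
    have hclo : ((clo n k : Fin n) : ℕ) = (k : ℕ) := rfl
    have hchi : ((chi n k : Fin n) : ℕ) = (k : ℕ) + 1 := rfl
    rw [hclo, hchi, sc, ← hufn, ← mul_smul, ← mon_succ, smul_smul]
    congr 1
    rw [pow_succ, mul_comm ((-q)⁻¹ ^ (k : ℕ)) _, ← mul_assoc, mul_inv_cancel₀ hneg, one_mul]
  · rw [if_neg hac]
    have hk : (k : ℕ) ≠ (a : ℕ) := by
      intro hcontra
      exact hac (Fin.ext hcontra.symm)
    show uf n q k • ((-q)⁻¹ ^ ((a : Fin n) : ℕ) • (mon n q ((a : Fin n) : ℕ) • v)) = 0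
    rw [sc, ← hufn, kill_ne v hq2 h0' h1' (a : ℕ) (k : ℕ) hk, smul_zero]

end Stmt2Main

theorem hom_from_conatural_eq_singular_space (n : ℕ) (hn : 2 ≤ n) (q : ℂ) (hq0 : q ≠ 0)
    (hq : NotRootOfUnity q) (V : Type*) [AddCommGroup V] [Module ℂ V] [Module (Un n q) V]
    [IsScalarTower ℂ (Un n q) V] :
    Set.BijOn (fun φ : (Fin n → ℂ) →ₗ[ℂ] V => φ (Pi.single (⟨0, by omega⟩ : Fin n) 1))
      {φ : (Fin n → ℂ) →ₗ[ℂ] V |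
        ∀ (k : Fin (n-1)) (v : Fin n → ℂ), φ ((-q) • natF n k v) = uf n q k • φ v}
      {v : V | (uf n q ⟨0, by omega⟩ * uf n q ⟨0, by omega⟩) • v = 0 ∧
        ∀ i : Fin (n-1), 1 ≤ (i:ℕ) → uf n q i • v = 0} := by
  have hn1 : 0 < n - 1 := by omega
  have hq2 : q + q⁻¹ ≠ 0 := by
    intro hs
    have hqq : q⁻¹ * q = 1 := inv_mul_cancel₀ hq0
    have h2 : q ^ 2 = -1 := by linear_combination q * hs - hqq
    have h4 : q ^ 4 = 1 := by
      calc q ^ 4 = (q ^ 2) ^ 2 := by ring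
      _ = 1 := by rw [h2]; norm_num
    exact hq 4 (by norm_num) h4
  refine ⟨?_, ?_, ?_⟩
  · -- MapsTo
    intro φ hφ
    simp only [Set.mem_setOf_eq] at hφ ⊢
    have hA := memA_single φ hφ
    constructor
    · have e0 := hA ⟨0, hn1⟩ (⟨0, by omega⟩ : Fin n)
      rw [if_pos (show (⟨0, by omega⟩ : Fin n) = clo n ⟨0, hn1⟩ from rfl)] at e0
      have hne : chi n (⟨0, hn1⟩ : Fin (n-1)) ≠ clo n ⟨0, hn1⟩ := by
        intro hcontra
        have := congrArg Fin.val hcontra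
        simp [chi, clo] at this
      have e1 := hA ⟨0, hn1⟩ (chi n ⟨0, hn1⟩)
      rw [if_neg hne] at e1
      rw [mul_smul, e0, sc, e1, smul_zero]
    · intro i hi
      have e := hA i (⟨0, by omega⟩ : Fin n)
      rw [if_neg (by
        intro hc
        have := congrArg Fin.val hc
        simp [clo] at this
        omega)] at e
      exact e
  · -- InjOn
    intro φ₁ hφ₁ φ₂ hφ₂ hval
    simp only [Set.mem_setOf_eq] at hφ₁ hφ₂
    have hA₁ := memA_single φ₁ hφ₁
    have hA₂ := memA_single φ₂ hφ₂
    have hmq : (-q) ≠ 0 := neg_ne_zero.mpr hq0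
    have key : ∀ a : ℕ, ∀ ha : a < n,
        φ₁ (Pi.single (⟨a, ha⟩ : Fin n) 1) = φ₂ (Pi.single (⟨a, ha⟩ : Fin n) 1) := by
      intro a
      induction a with
      | zero => intro ha; exact hval
      | succ c ih =>
        intro ha
        have hc : c < n - 1 := by omega
        have e1 := hA₁ ⟨c, hc⟩ (clo n ⟨c, hc⟩)
        have e2 := hA₂ ⟨c, hc⟩ (clo n ⟨c, hc⟩)
        rw [if_pos rfl] at e1 e2
        have hval' : φ₁ (Pi.single (clo n ⟨c, hc⟩) 1) = φ₂ (Pi.single (clo n ⟨c, hc⟩) 1) :=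
          ih (by omega)
        have hstep : (-q) • φ₁ (Pi.single (chi n ⟨c, hc⟩) 1)
            = (-q) • φ₂ (Pi.single (chi n ⟨c, hc⟩) 1) := by
          rw [← e1, ← e2, hval']
        have hfin : φ₁ (Pi.single (chi n ⟨c, hc⟩) 1) = φ₂ (Pi.single (chi n ⟨c, hc⟩) 1) := by
          calc φ₁ (Pi.single (chi n ⟨c, hc⟩) 1)
              = (-q)⁻¹ • ((-q) • φ₁ (Pi.single (chi n ⟨c, hc⟩) 1)) :=
                (inv_smul_smul₀ hmq _).symm
            _ = (-q)⁻¹ • ((-q) • φ₂ (Pi.single (chi n ⟨c, hc⟩) 1)) := by rw [hstep]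
            _ = φ₂ (Pi.single (chi n ⟨c, hc⟩) 1) := inv_smul_smul₀ hmq _
        exact hfin
    apply LinearMap.ext
    intro w
    rw [apply_eq_sum, apply_eq_sum]
    exact Finset.sum_congr rfl fun a _ =>
      congrArg (fun x => w a • x) (key a.1 a.2)
  · -- SurjOn
    intro v hv
    simp only [Set.mem_setOf_eq] at hv
    obtain ⟨hv0, hv1⟩ := hv
    have h0' : (ufn n q 0 * ufn n q 0) • v = 0 := by
      rw [show ufn n q 0 = uf n q ⟨0, hn1⟩ from dif_pos hn1]
      exact hv0
    have h1' : ∀ k : ℕ, 1 ≤ k → ufn n q k • v = 0 := by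
      intro k hk
      by_cases hkn : k < n - 1
      · rw [show ufn n q k = uf n q ⟨k, hkn⟩ from dif_pos hkn]
        exact hv1 ⟨k, hkn⟩ hk
      · rw [show ufn n q k = 0 from dif_neg hkn, zero_smul]
    refine ⟨mkPhi n (uvec n q v), ?_, ?_⟩
    · intro k w
      calc mkPhi n (uvec n q v) ((-q) • natF n k w)
          = (-q) • (w (clo n k) • uvec n q v (chi n k)) := by
            rw [map_smul, natF_apply, mkPhi_single]
        _ = w (clo n k) • ((-q) • uvec n q v (chi n k)) := smul_comm _ _ _
        _ = ∑ a, w a • (if a = clo n k then (-q) • uvec n q v (chi n k) else 0) := by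
            rw [Finset.sum_eq_single (clo n k)
              (fun b _ hb => by rw [if_neg hb, smul_zero])
              (fun h => absurd (Finset.mem_univ _) h), if_pos rfl]
        _ = ∑ a, w a • (uf n q k • uvec n q v a) :=
            Finset.sum_congr rfl fun a _ => by
              rw [uf_smul_uvec hq0 hq2 v h0' h1' k a]
        _ = uf n q k • mkPhi n (uvec n q v) w := by
            rw [mkPhi_apply, Finset.smul_sum]
            exact Finset.sum_congr rfl fun a _ => (sc _ _ _).symm
    · show mkPhi n (uvec n q v) (Pi.single (⟨0, by omega⟩ : Fin n) 1) = v
      rw [mkPhi_single, one_smul]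
      show (-q)⁻¹ ^ ((⟨0, by omega⟩ : Fin n) : ℕ) • (mon n q ((⟨0, by omega⟩ : Fin n) : ℕ) • v) = v
      simp [mon_zero]

end QGL
end
end

section
/- Let λ ∈ ℂⁿ, let M be a U_q(gl_n)-submodule of ℂⁿ ⊗ M̂_λ, let y ∈ M̂_λ, and let 1 ≤ r ≤ t ≤ n be such that w_p ⊗ y ∈ M for all r ≤ p ≤ t. Then for every 1 ≤ m ≤ n−1 one has w_p ⊗ f_m y ∈ M for all r ≤ p ≤ t−1, and if in addition m ≠ t then also w_t ⊗ f_m y ∈ M. -/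
set_option synthInstance.maxHeartbeats 1000000
set_option maxHeartbeats 1000000


noncomputable section

namespace QGL

theorem column_shift_in_submodule (n : ℕ) (hn : 2 ≤ n) (h : ℂ) (hq : NotRootOfUnity (qh h))
    (lam : Fin n → ℂ) (M : Submodule ℂ (Fin n → Verma n h lam))
    (hME : ∀ (k : Fin (n-1)) x, x ∈ M → Etens n h k x ∈ M)
    (hMF : ∀ (k : Fin (n-1)) x, x ∈ M → Ftens n h k x ∈ M)
    (hMK : ∀ (i : Fin n) x, x ∈ M → Ktens n h i x ∈ M)
    (hMKinv : ∀ (i : Fin n) x, x ∈ M → Kinvtens n h i x ∈ M)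
    (y : Verma n h lam) (r t : Fin n) (hrt : r ≤ t)
    (hmem : ∀ p : Fin n, r ≤ p → p ≤ t → Pi.single p y ∈ M)
    (m : Fin (n-1)) :
    (∀ p : Fin n, r ≤ p → p < t → Pi.single p (uF n (qh h) m • y) ∈ M) ∧
    ((m:ℕ) ≠ (t:ℕ) → Pi.single t (uF n (qh h) m • y) ∈ M) := by
  have hq0 : qh h ≠ 0 := Complex.exp_ne_zero h
  have hsz : ∀ c : ℂ, c • (0 : Verma n h lam) = 0 := by
    intro c
    show c • (Submodule.Quotient.mk 0 : Verma n h lam) = Submodule.Quotient.mk 0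
    rw [← Submodule.Quotient.mk_smul, smul_zero]
  have hinv : ∀ z : Verma n h lam, (qh h)⁻¹ • qh h • z = z := by
    intro z
    obtain ⟨w, rfl⟩ := Submodule.Quotient.mk_surjective _ z
    rw [← Submodule.Quotient.mk_smul, ← Submodule.Quotient.mk_smul, inv_smul_smul₀ hq0]
  have hclochi : clo n m ≠ chi n m := by
    intro e
    have h2 : (m:ℕ) = (m:ℕ)+1 := congrArg Fin.val e
    omega
  -- case p ≠ clo n m : Ftens acts diagonally
  have keyA : ∀ (p : Fin n), p ≠ clo n m →
      Ftens n h m (Pi.single p y) = Pi.single p (uF n (qh h) m • y) := by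
    intro p hp
    funext j
    simp only [Ftens, Pi.single_apply]
    have hcp : ¬ (clo n m = p) := fun e => hp e.symm
    by_cases hj : j = chi n m
    · simp [hj, hcp, smul_ite]
    · simp [hj, smul_ite]
  -- case p = clo n m
  have keyB : Ftens n h m (Pi.single (clo n m) y)
      = Pi.single (clo n m) (uF n (qh h) m • y)
        + Pi.single (chi n m) ((uKinv n (qh h) (clo n m) * uK n (qh h) (chi n m)) • y) := by
    funext j
    simp only [Ftens, Pi.single_apply, Pi.add_apply]
    by_cases hj : j = chi n m
    · simp [hj, hclochi, (fun e => hclochi e.symm : ¬ chi n m = clo n m), smul_ite]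
    · simp [hj, smul_ite]
  -- K-computation
  have keyC : Kinvtens n h (clo n m) (Ktens n h (chi n m) (Pi.single (chi n m) y))
      = Pi.single (chi n m)
          (qh h • (uKinv n (qh h) (clo n m) * uK n (qh h) (chi n m)) • y) := by
    funext j
    simp only [Kinvtens, Ktens, Pi.single_apply, Pi.smul_apply]
    by_cases hj : j = chi n m
    · subst hj
      simp [hclochi, mul_smul, smul_comm (qh h)]
    · simp [hj, (fun e => hj e.symm : ¬ chi n m = j)]
  have extra : ∀ p : Fin n, r ≤ p → p < t →
      Pi.single p (uF n (qh h) m • y) ∈ M := by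
    intro p hrp hpt
    by_cases hp : p = clo n m
    · -- p = clo n m; then chi n m ≤ t
      have hchilt : (chi n m : ℕ) ≤ (t : ℕ) := by
        have h1 : (p : ℕ) < (t : ℕ) := hpt
        have hpv : (p : ℕ) = (m : ℕ) := by rw [hp]; rfl
        have h2 : (chi n m : ℕ) = (m:ℕ)+1 := rfl
        omega
      have hrchi : r ≤ chi n m := by
        have h1 : (r : ℕ) ≤ (p : ℕ) := hrp
        have hpv : (p : ℕ) = (m : ℕ) := by rw [hp]; rfl
        have h2 : (chi n m : ℕ) = (m:ℕ)+1 := rfl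
        rw [Fin.le_def, h2]; omega
      have h1 : Pi.single (chi n m) y ∈ M := hmem _ hrchi hchilt
      have h2 := hMKinv (clo n m) _ (hMK (chi n m) _ h1)
      rw [keyC] at h2
      have h3 : Pi.single (chi n m)
          ((uKinv n (qh h) (clo n m) * uK n (qh h) (chi n m)) • y) ∈ M := by
        have h4 := M.smul_mem (qh h)⁻¹ h2
        have h5 : (qh h)⁻¹ • (Pi.single (chi n m)
              (qh h • (uKinv n (qh h) (clo n m) * uK n (qh h) (chi n m)) • y)
              : Fin n → Verma n h lam)
            = Pi.single (chi n m)
              ((uKinv n (qh h) (clo n m) * uK n (qh h) (chi n m)) • y) := by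
          funext j
          by_cases hj : j = chi n m
          · simp only [Pi.smul_apply, Pi.single_apply, if_pos hj]
            exact hinv _
          · simp only [Pi.smul_apply, Pi.single_apply, if_neg hj]
            exact hsz _
        rwa [h5] at h4
      have h4 := hMF m _ (hmem p hrp (le_of_lt hpt))
      rw [hp] at h4 ⊢
      rw [keyB] at h4
      have := M.sub_mem h4 h3
      simpa using this
    · have := hMF m _ (hmem p hrp (le_of_lt hpt))
      rwa [keyA p hp] at this
  refine ⟨extra, fun hmt => ?_⟩
  have hp : t ≠ clo n m := by
    intro e
    have h2 : (t:ℕ) = (m:ℕ) := congrArg Fin.val e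
    exact hmt h2.symm
  have := hMF m _ (hmem t hrt le_rfl)
  rwa [keyA t hp] at this

end QGL
end
end

section
/- Let λ ∈ ℂⁿ and 1 ≤ i < j ≤ n, and for i ≤ l < j set ψ_{lj} := f_l f_{l+1} ⋯ f_{j−1} ∈ U_q(gl_n) (the rightmost factor acting first). Then: (a) for every i ≤ l < j, w_l ⊗ ψ_{lj} v_λ ≡ (−1)^{j−l} q^{λ_j − λ_l + l − j + 1} w_j ⊗ v_λ modulo V̂^λ_{j−1}; (b) if ψ is any product of the factors f_i, f_{i+1}, …, f_{j−1}, each occurring exactly once, taken in any order different from f_i f_{i+1} ⋯ f_{j−1}, then w_i ⊗ ψ v_λ ∈ V̂^λ_{j−1}. -/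
noncomputable section

namespace QGL

/-! In `ℂⁿ ⊗ M̂_λ` one has `f_k (w_p ⊗ y) = w_p ⊗ f_k y + δ_{pk} w_{p+1} ⊗ K_k⁻¹K_{k+1} y`, and on a
weight vector `y` of weight `μ` the element `K_k⁻¹K_{k+1}` acts by `q^{μ_{k+1} - μ_k}`. As `V̂_j` is
`f`-stable, `w_p ⊗ y ∈ V̂_j` therefore gives `w_p ⊗ f_k y ∈ V̂_j` for `k ≠ p`, and
`w_k ⊗ f_k y ≡ -q^{μ_{k+1} - μ_k} w_{k+1} ⊗ y` modulo `V̂_j`. Starting from `w_p ⊗ v_λ ∈ V̂_j` for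
`p < j`, the index of `w` can thus climb from `p` up to `j` only if the word in the `f`'s contains
`f_p, f_{p+1}, …, f_{j-1}` as a subword in this order; among the words using each of
`f_i, …, f_{j-1}` exactly once this happens only for `ψ_{ij}`, which gives (b). For `ψ_{lj}` the
scalars `-q^{μ_{k+1} - μ_k}` collected along the way multiply to the coefficient in (a). -/

theorem qz_add (h a b : ℂ) : qz h (a + b) = qz h a * qz h b := by
  simp only [qz, mul_add, Complex.exp_add]

theorem qz_intCast (h : ℂ) (m : ℤ) : qz h m = qh h ^ m := by
  rw [qz, qh, mul_comm, Complex.exp_int_mul]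

theorem uK_mul_uF {n : ℕ} {q : ℂ} (a : Fin n) (k : Fin (n-1)) :
    uK n q a * uF n q k = (q ^ (dlt a (chi n k) - dlt a (clo n k))) • (uF n q k * uK n q a) := by
  simpa [uK, uF] using RingQuot.mkAlgHom_rel ℂ (GLRel.KF (q := q) a k)

theorem uKinv_mul_uK {n : ℕ} {q : ℂ} (a : Fin n) : uKinv n q a * uK n q a = 1 := by
  simpa [uK, uKinv] using RingQuot.mkAlgHom_rel ℂ (GLRel.KinvK (q := q) a)

theorem uFn_of_lt {n : ℕ} (h : ℂ) {a : ℕ} (ha : a < n - 1) :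
    uFn n h a = uF n (qh h) ⟨a, ha⟩ :=
  dif_pos ha

theorem lamn_val {n : ℕ} (lam : Fin n → ℂ) (a : Fin n) : lamn n lam a = lam a :=
  dif_pos a.isLt

def fWeight {n : ℕ} (k : Fin (n-1)) : Fin n → ℂ :=
  fun a => ((dlt a (chi n k) - dlt a (clo n k) : ℤ) : ℂ)

section WeightVector

variable (n : ℕ) (h : ℂ) {Y : Type*} [AddCommGroup Y] [Module (UQ n h) Y]

theorem Ftens_single_of_ne {k : Fin (n-1)} {p : Fin n} (hp : p ≠ clo n k) (y : Y) :
    Ftens n h k (Pi.single p y) = Pi.single p (uF n (qh h) k • y) := by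
  funext c
  simp only [Ftens, Pi.single_apply, Ne.symm hp, if_false]
  split_ifs <;> simp

variable [Module ℂ Y]

def IsWeightVector (y : Y) (μ : Fin n → ℂ) : Prop :=
  ∀ a, uK n (qh h) a • y = qz h (μ a) • y

variable {n h}

theorem isWeightVector_zero (μ : Fin n → ℂ) : IsWeightVector n h (0 : Y) μ := fun a => by
  simp only [smul_zero]

variable [IsScalarTower ℂ (UQ n h) Y]

theorem IsWeightVector.uF_smul {y : Y} {μ : Fin n → ℂ} (hy : IsWeightVector n h y μ)
    (k : Fin (n-1)) : IsWeightVector n h (uF n (qh h) k • y) (μ + fWeight k) := fun a => by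
  rw [← mul_smul, uK_mul_uF, smul_assoc, mul_smul, hy a, smul_comm _ (qz h (μ a)), smul_smul,
    Pi.add_apply, qz_add, fWeight, qz_intCast, mul_comm]

theorem IsWeightVector.exists_uFn_smul {y : Y} {μ : Fin n → ℂ} (hy : IsWeightVector n h y μ)
    (k : ℕ) : ∃ ν, IsWeightVector n h (uFn n h k • y) ν := by
  by_cases hk : k < n - 1
  · exact ⟨_, uFn_of_lt h hk ▸ hy.uF_smul _⟩
  · exact ⟨μ, by rw [uFn, dif_neg hk, zero_smul]; exact isWeightVector_zero μ⟩

theorem IsWeightVector.uKinv_mul_uK_smul {y : Y} {μ : Fin n → ℂ} (hy : IsWeightVector n h y μ)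
    (a b : Fin n) : (uKinv n (qh h) a * uK n (qh h) b) • y = qz h (μ b - μ a) • y := by
  have hinv : uKinv n (qh h) a • y = qz h (-μ a) • y := by
    have hy' : qz h (μ a) • uKinv n (qh h) a • y = y := by
      rw [smul_comm, ← hy a, ← mul_smul, uKinv_mul_uK, one_smul]
    conv_rhs => rw [← hy']
    rw [smul_smul, ← qz_add, neg_add_cancel, qz, mul_zero, Complex.exp_zero, one_smul]
  rw [mul_smul, hy b, smul_comm, hinv, smul_smul, ← qz_add, sub_eq_add_neg]

theorem IsWeightVector.single_clo_uF_smul {y : Y} {μ : Fin n → ℂ}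
    (hy : IsWeightVector n h y μ) (k : Fin (n-1)) :
    Pi.single (clo n k) (uF n (qh h) k • y) = Ftens n h k (Pi.single (clo n k) y)
      - qz h (μ (chi n k) - μ (clo n k)) • (Pi.single (chi n k) y : Fin n → Y) := by
  rw [← Pi.single_smul', ← hy.uKinv_mul_uK_smul]
  funext c
  simp only [Ftens, Pi.single_apply, Pi.sub_apply]
  split_ifs <;> simp

end WeightVector

section Filtration

variable {n : ℕ} {h : ℂ} {lam : Fin n → ℂ} {j : ℕ}

theorem isWeightVector_vv : IsWeightVector n h (vv n h lam) lam := fun a => by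
  rw [vv, ← Submodule.Quotient.mk_smul, ← Submodule.Quotient.mk_smul, ← sub_eq_zero,
    ← Submodule.Quotient.mk_sub, Submodule.Quotient.mk_eq_zero, smul_eq_mul, mul_one,
    Algebra.smul_def, mul_one]
  exact Submodule.subset_span (Or.inr ⟨a, rfl⟩)

theorem single_vv_mem_Vhat {p : Fin n} (hp : (p : ℕ) < j) :
    Pi.single p (vv n h lam) ∈ Vhat n h lam j :=
  Submodule.mem_sInf.2 fun _ hW => hW.1 p hp

theorem Ftens_mem_Vhat (k : Fin (n-1)) {u : Fin n → Verma n h lam}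
    (hu : u ∈ Vhat n h lam j) : Ftens n h k u ∈ Vhat n h lam j :=
  Submodule.mem_sInf.2 fun W hW => hW.2 k u (Submodule.mem_sInf.1 hu W hW)

theorem exists_isWeightVector_prod_smul_vv (L : List ℕ) :
    ∃ μ, IsWeightVector n h ((L.map (uFn n h)).prod • vv n h lam) μ := by
  induction L with
  | nil => exact ⟨lam, by simpa using isWeightVector_vv⟩
  | cons k L ih =>
    obtain ⟨μ, hμ⟩ := ih
    simpa only [List.map_cons, List.prod_cons, mul_smul] using hμ.exists_uFn_smul k

theorem lt_of_not_range'_sublist {p j : ℕ} {L : List ℕ}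
    (hL : ¬ (List.range' p (j - p)).Sublist L) : p < j := by
  by_contra hpj
  exact hL (by simp [Nat.sub_eq_zero_of_le (not_lt.1 hpj)])

theorem single_prod_smul_vv_mem_Vhat (L : List ℕ) (p : Fin n)
    (hL : ¬ (List.range' p (j - p)).Sublist L) :
    Pi.single p ((L.map (uFn n h)).prod • vv n h lam) ∈ Vhat n h lam j := by
  induction L generalizing p with
  | nil => simpa using single_vv_mem_Vhat (lt_of_not_range'_sublist hL)
  | cons k L ih =>
    have hpL : ¬ (List.range' p (j - p)).Sublist L := fun hs => hL (hs.cons k)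
    rw [List.map_cons, List.prod_cons, mul_smul]
    by_cases hk : k < n - 1
    swap
    · rw [uFn, dif_neg hk, zero_smul, Pi.single_zero]
      exact zero_mem _
    rw [uFn_of_lt h hk]
    by_cases hpk : (p : ℕ) = k
    · obtain rfl : p = clo n ⟨k, hk⟩ := Fin.ext hpk
      have hkj : k < j := lt_of_not_range'_sublist hpL
      have hsucc : ¬ (List.range' (chi n ⟨k, hk⟩) (j - chi n ⟨k, hk⟩)).Sublist L := by
        intro hs
        apply hL
        rw [clo, show j - k = j - (k + 1) + 1 by omega, List.range'_succ]
        exact hs.cons_cons k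
      obtain ⟨μ, hμ⟩ := exists_isWeightVector_prod_smul_vv (h := h) (lam := lam) L
      rw [hμ.single_clo_uF_smul]
      exact sub_mem (Ftens_mem_Vhat _ (ih _ hpL)) (Submodule.smul_mem _ _ (ih _ hsucc))
    · rw [← Ftens_single_of_ne n h fun hp => hpk (congrArg Fin.val hp)]
      exact Ftens_mem_Vhat _ (ih p hpL)

theorem psi_eq_prod (a b : ℕ) : psi n h a b = ((List.range' a (b - a)).map (uFn n h)).prod := by
  simp [psi, List.range'_eq_map_range, List.map_map, Function.comp_def]

theorem psi_self (a : ℕ) : psi n h a a = 1 := by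
  simp [psi]

theorem psi_cons (a b : ℕ) (hab : a < b) :
    psi n h a b = uFn n h a * psi n h (a + 1) b := by
  rw [psi_eq_prod, psi_eq_prod, show b - a = b - (a + 1) + 1 by omega, List.range'_succ,
    List.map_cons, List.prod_cons]

theorem isWeightVector_psi_smul_vv {a b : ℕ} (hab : a ≤ b) (hb : b < n) :
    IsWeightVector n h (psi n h a b • vv n h lam)
      (fun c => lam c - (if (c : ℕ) = a then 1 else 0) + (if (c : ℕ) = b then 1 else 0)) := by
  induction hab using Nat.decreasingInduction with
  | self =>
    simpa [psi] using isWeightVector_vv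
  | of_succ a hab ih =>
    rw [psi_cons a b hab, mul_smul, uFn_of_lt h (by omega)]
    convert ih.uF_smul _ using 1
    funext c
    simp only [Pi.add_apply, fWeight, dlt, chi, clo, Fin.ext_iff]
    split_ifs <;> push_cast <;> ring

-- `hC` is `C = -q^{μ_{l+1} - μ_l} C'` for the weight `μ = λ - ε_{l+1} + ε_j` of `ψ_{l+1,j} v_λ`.
theorem single_psi_smul_vv_sub_mem_Vhat_of_succ {l : ℕ} (hlj : l < j) (hjn : j < n)
    {C C' : ℂ} (hu : Pi.single (⟨l + 1, by omega⟩ : Fin n) (psi n h (l + 1) j • vv n h lam)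
      - C' • (Pi.single (⟨j, hjn⟩ : Fin n) (vv n h lam) : Fin n → Verma n h lam)
      ∈ Vhat n h lam j)
    (hC : C = -(qz h (lamn n lam (l + 1) - lamn n lam l - if l + 1 = j then 0 else 1) * C')) :
    Pi.single (⟨l, by omega⟩ : Fin n) (psi n h l j • vv n h lam)
      - C • (Pi.single (⟨j, hjn⟩ : Fin n) (vv n h lam) : Fin n → Verma n h lam)
      ∈ Vhat n h lam j := by
  let k : Fin (n-1) := ⟨l, by omega⟩
  have hy := isWeightVector_psi_smul_vv (h := h) (lam := lam) (show l + 1 ≤ j from hlj) hjn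
  have hweight : (lam (chi n k) - (if (chi n k : ℕ) = l + 1 then 1 else 0)
        + (if (chi n k : ℕ) = j then 1 else 0))
      - (lam (clo n k) - (if (clo n k : ℕ) = l + 1 then 1 else 0)
        + (if (clo n k : ℕ) = j then 1 else 0))
      = lamn n lam (l + 1) - lamn n lam l - if l + 1 = j then 0 else 1 := by
    rw [← lamn_val lam (chi n k), ← lamn_val lam (clo n k),
      show (chi n k : ℕ) = l + 1 from rfl, show (clo n k : ℕ) = l from rfl]
    by_cases hj : l + 1 = j <;> simp [hj, hlj.ne]; ring
  have hmem : Pi.single (clo n k) (psi n h (l + 1) j • vv n h lam) ∈ Vhat n h lam j := by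
    rw [psi_eq_prod]
    refine single_prod_smul_vv_mem_Vhat _ _ fun hs => ?_
    have := hs.subset (List.mem_range'_1.2 ⟨le_rfl, show l < l + (j - l) by omega⟩)
    simp [List.mem_range'_1, clo, k] at this
  rw [psi_cons l j hlj, mul_smul, uFn_of_lt h (show l < n - 1 by omega),
    show (⟨l, _⟩ : Fin n) = clo n k from rfl, hy.single_clo_uF_smul, hweight,
    show chi n k = ⟨l + 1, by omega⟩ from rfl, hC]
  convert sub_mem (Ftens_mem_Vhat k hmem) (Submodule.smul_mem _
    (qz h (lamn n lam (l + 1) - lamn n lam l - if l + 1 = j then 0 else 1)) hu) using 1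
  module

theorem single_psi_smul_vv_sub_mem_Vhat {l : ℕ} (hlj : l < j) (hjn : j < n) :
    Pi.single (⟨l, by omega⟩ : Fin n) (psi n h l j • vv n h lam)
      - ((-1:ℂ)^(j-l) * qz h (lamn n lam j - lamn n lam l + (l:ℂ) - (j:ℂ) + 1)) •
          (Pi.single (⟨j, hjn⟩ : Fin n) (vv n h lam) : Fin n → Verma n h lam)
      ∈ Vhat n h lam j := by
  obtain ⟨d, hd⟩ : ∃ d, j = l + 1 + d := ⟨j - (l + 1), by omega⟩
  induction d generalizing l with
  | zero =>
    obtain rfl : j = l + 1 := hd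
    have hu : Pi.single (⟨l + 1, hjn⟩ : Fin n) (psi n h (l + 1) (l + 1) • vv n h lam)
        - (1 : ℂ) •
          (Pi.single (⟨l + 1, hjn⟩ : Fin n) (vv n h lam) : Fin n → Verma n h lam)
        ∈ Vhat n h lam (l + 1) := by
      rw [psi_self, one_smul]
      convert (Vhat n h lam (l + 1)).zero_mem using 1
      module
    refine single_psi_smul_vv_sub_mem_Vhat_of_succ hlj hjn hu ?_
    rw [if_pos rfl, Nat.add_sub_cancel_left, pow_one, mul_one, neg_one_mul]
    congr 2
    push_cast
    ring
  | succ d ih =>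
    refine single_psi_smul_vv_sub_mem_Vhat_of_succ hlj hjn (ih (by omega) (by omega)) ?_
    have hexp : lamn n lam j - lamn n lam l + l - j + 1
        = (lamn n lam (l + 1) - lamn n lam l - 1)
          + (lamn n lam j - lamn n lam (l + 1) + ((l + 1 : ℕ) : ℂ) - j + 1) := by
      push_cast
      ring
    rw [if_neg (by omega), show j - l = j - (l + 1) + 1 by omega, hexp, qz_add]
    ring

end Filtration

theorem perm_eq_refl_of_ofFn_add_eq_range' {m : ℕ} (g : Equiv.Perm (Fin m)) (i : ℕ)
    (hg : List.ofFn (fun t => i + (g t : ℕ)) = List.range' i m) : g = Equiv.refl _ := by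
  ext t
  have := congrArg (·[(t : ℕ)]?) hg
  simpa using this

theorem principal_monomials_mod_filtration (n : ℕ) (h : ℂ)
    (lam : Fin n → ℂ) (i j : ℕ) (hij : i < j) (hjn : j < n) :
    (∀ (l : ℕ) (hil : i ≤ l) (hlj : l < j),
      (Pi.single (⟨l, by omega⟩ : Fin n) (psi n h l j • vv n h lam)
        - ((-1:ℂ)^(j-l) * qz h (lamn n lam j - lamn n lam l + (l:ℂ) - (j:ℂ) + 1)) •
            (Pi.single (⟨j, hjn⟩ : Fin n) (vv n h lam) : Fin n → Verma n h lam))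
        ∈ Vhat n h lam j) ∧
    (∀ g : Equiv.Perm (Fin (j - i)), g ≠ Equiv.refl _ →
      Pi.single (⟨i, by omega⟩ : Fin n)
          ((List.ofFn (fun t : Fin (j-i) => uFn n h (i + (g t : ℕ)))).prod • vv n h lam)
        ∈ Vhat n h lam j) := by
  refine ⟨fun l _ hlj => single_psi_smul_vv_sub_mem_Vhat hlj hjn, fun g hg => ?_⟩
  have hword : ¬ (List.range' i (j - i)).Sublist (List.ofFn fun t => i + (g t : ℕ)) :=
    fun hs => hg (perm_eq_refl_of_ofFn_add_eq_range' g i (hs.eq_of_length (by simp)).symm)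
  simpa [List.map_ofFn, Function.comp_def] using
    single_prod_smul_vv_mem_Vhat _ ⟨i, by omega⟩ hword

end QGL
end
end
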